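/- Validity of the three-stage logic-based Benders optimality cut: let Ŝ ⊆ P be the patient set and ŷ ≥ 1 the number of ORs of the current master solution, with corresponding subproblem optimum Q̄ = Q(Ŝ, ŷ). Then for every S' ⊆ P and every y' with 1 ≤ y' ≤ ŷ, one has Q(S', y') ≥ Q̄ · (1 − |Ŝ \ S'|), where |Ŝ \ S'| is the number of patients of Ŝ not in S'. (Equivalently, the cut pair Q ≥ Q̄·(g − Σ_{p∈Ŝ}(1 − x_p)) and y ≥ (1 + ŷ)(1 − g) with g ∈ {0,1} is satisfied by every feasible solution with its true cancellation cost.) -/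
import Mathlib


open Finset

/-- The single-OR cancellation cost of a set `A` of patients assigned to an operating
room with time limit `B`, for duration function `T`. -/
noncomputable def qcost {α : Type*} [DecidableEq α] (c T : α → ℝ) {B : ℝ} (hB : 0 ≤ B)
    (A : Finset α) : ℝ :=
  (A.powerset.filter (fun Z => ∑ p ∈ Z, T p ≤ B)).inf'
    ⟨∅, by simp [hB]⟩ (fun Z => ∑ p ∈ A \ Z, c p)

/-- The optimal expected cancellation cost of assigning the patients of `S` to `y`
opened operating rooms: the minimum, over assignments `a` of patients to ORs, of the
average over scenarios `s ∈ 𝒮` of the sum over ORs `r` of the single-OR cancellation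
cost of the patients of `S` assigned to `r`. -/
noncomputable def Qexp {α σ : Type*} [DecidableEq α] (c : α → ℝ) (𝒮 : Finset σ)
    (T : σ → α → ℝ) {B : ℝ} (hB : 0 ≤ B) (S : Finset α) (y : ℕ) : ℝ :=
  sInf { v : ℝ | ∃ a : α → Fin y,
    v = (𝒮.card : ℝ)⁻¹ *
      ∑ s ∈ 𝒮, ∑ r : Fin y, qcost c (T s) hB (S.filter (fun p => a p = r)) }

lemma qcost_nonneg {α : Type*} [DecidableEq α] {c T : α → ℝ} {B : ℝ} (hB : 0 ≤ B)
    {A : Finset α} (hc : ∀ p ∈ A, 0 ≤ c p) : 0 ≤ qcost c T hB A := by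
  apply Finset.le_inf'
  intro Z _
  exact Finset.sum_nonneg fun p hp => hc p (Finset.mem_sdiff.mp hp).1

lemma qcost_empty {α : Type*} [DecidableEq α] (c T : α → ℝ) {B : ℝ} (hB : 0 ≤ B) :
    qcost c T hB (∅ : Finset α) = 0 := by
  unfold qcost
  simp [hB]

lemma qcost_mono {α : Type*} [DecidableEq α] {c T : α → ℝ} {B : ℝ} (hB : 0 ≤ B)
    {A A' : Finset α} (hAA : A ⊆ A')
    (hc : ∀ p ∈ A', 0 ≤ c p) (hT : ∀ p ∈ A', 0 ≤ T p) :
    qcost c T hB A ≤ qcost c T hB A' := by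
  apply Finset.le_inf'
  intro Z hZ
  rw [Finset.mem_filter, Finset.mem_powerset] at hZ
  obtain ⟨hZA', hZB⟩ := hZ
  have hmem : Z ∩ A ∈ (A.powerset.filter (fun W => ∑ p ∈ W, T p ≤ B)) := by
    rw [Finset.mem_filter, Finset.mem_powerset]
    refine ⟨Finset.inter_subset_right, ?_⟩
    calc ∑ p ∈ Z ∩ A, T p ≤ ∑ p ∈ Z, T p :=
          Finset.sum_le_sum_of_subset_of_nonneg Finset.inter_subset_left
            (fun p hp _ => hT p (hZA' hp))
      _ ≤ B := hZB
  calc qcost c T hB A ≤ ∑ p ∈ A \ (Z ∩ A), c p := Finset.inf'_le _ hmem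
    _ ≤ ∑ p ∈ A' \ Z, c p := by
        apply Finset.sum_le_sum_of_subset_of_nonneg
        · intro p hp
          rw [Finset.mem_sdiff] at hp ⊢
          exact ⟨hAA hp.1, fun h => hp.2 (Finset.mem_inter.mpr ⟨h, hp.1⟩)⟩
        · intro p hp _
          exact hc p (Finset.sdiff_subset hp)

lemma Qexp_mem_nonneg {α σ : Type*} [DecidableEq α] {c : α → ℝ} {𝒮 : Finset σ}
    {T : σ → α → ℝ} {B : ℝ} (hB : 0 ≤ B) {S : Finset α} {y : ℕ}
    (hc : ∀ p ∈ S, 0 ≤ c p) :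
    ∀ v ∈ { v : ℝ | ∃ a : α → Fin y,
      v = (𝒮.card : ℝ)⁻¹ *
        ∑ s ∈ 𝒮, ∑ r : Fin y, qcost c (T s) hB (S.filter (fun p => a p = r)) }, 0 ≤ v := by
  rintro v ⟨a, rfl⟩
  apply mul_nonneg (by positivity)
  apply Finset.sum_nonneg
  intro s _
  apply Finset.sum_nonneg
  intro r _
  exact qcost_nonneg hB fun p hp => hc p (Finset.filter_subset _ _ hp)

lemma Qexp_nonneg {α σ : Type*} [DecidableEq α] {c : α → ℝ} {𝒮 : Finset σ}
    {T : σ → α → ℝ} {B : ℝ} (hB : 0 ≤ B) {S : Finset α} {y : ℕ}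
    (hc : ∀ p ∈ S, 0 ≤ c p) : 0 ≤ Qexp c 𝒮 T hB S y :=
  Real.sInf_nonneg (Qexp_mem_nonneg hB hc)

lemma Qexp_mono {α σ : Type*} [DecidableEq α] {c : α → ℝ} {𝒮 : Finset σ}
    {T : σ → α → ℝ} {B : ℝ} (hB : 0 ≤ B) {S S' : Finset α} {y y' : ℕ}
    (hc : ∀ p ∈ S', 0 ≤ c p) (hT : ∀ s ∈ 𝒮, ∀ p ∈ S', 0 ≤ T s p)
    (hSS : S ⊆ S') (hy1 : 1 ≤ y') (hy : y' ≤ y) :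
    Qexp c 𝒮 T hB S y ≤ Qexp c 𝒮 T hB S' y' := by
  apply le_csInf
  · exact ⟨_, ⟨fun _ => (⟨0, hy1⟩ : Fin y'), rfl⟩⟩
  rintro v ⟨a, rfl⟩
  have key : ∀ s ∈ 𝒮,
      ∑ r : Fin y, qcost c (T s) hB (S.filter (fun p => Fin.castLE hy (a p) = r))
      ≤ ∑ r : Fin y', qcost c (T s) hB (S'.filter (fun p => a p = r)) := by
    intro s hs
    have h1 : ∑ r : Fin y, qcost c (T s) hB (S.filter (fun p => Fin.castLE hy (a p) = r))
        = ∑ r ∈ (Finset.univ : Finset (Fin y')).image (Fin.castLE hy),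
            qcost c (T s) hB (S.filter (fun p => Fin.castLE hy (a p) = r)) := by
      symm
      apply Finset.sum_subset (Finset.subset_univ _)
      intro r _ hr
      have he : S.filter (fun p => Fin.castLE hy (a p) = r) = ∅ := by
        apply Finset.filter_false_of_mem
        intro p _ h
        exact hr (Finset.mem_image.mpr ⟨a p, Finset.mem_univ _, h⟩)
      rw [he, qcost_empty]
    rw [h1, Finset.sum_image (fun x _ z _ h => Fin.castLE_injective hy h)]
    apply Finset.sum_le_sum
    intro r' _
    have he : S.filter (fun p => Fin.castLE hy (a p) = Fin.castLE hy r')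
        = S.filter (fun p => a p = r') := by
      apply Finset.filter_congr
      intro p _
      exact ⟨fun h => Fin.castLE_injective hy h, fun h => by rw [h]⟩
    rw [he]
    exact qcost_mono hB (Finset.filter_subset_filter _ hSS) (fun p hp => hc p (Finset.filter_subset _ _ hp)) (fun p hp => hT s hs p (Finset.filter_subset _ _ hp))
  refine le_trans (csInf_le ⟨0, Qexp_mem_nonneg hB fun p hp => hc p (hSS hp)⟩
    ⟨fun p => Fin.castLE hy (a p), rfl⟩) ?_
  apply mul_le_mul_of_nonneg_left _ (by positivity)
  exact Finset.sum_le_sum key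

/-- Validity of the three-stage logic-based Benders optimality cut: if `Ŝ ⊆ P` is the
patient set and `ŷ ≥ 1` the number of ORs of the current master solution, with
subproblem optimum `Q̄ = Q(Ŝ, ŷ)`, then for every `S' ⊆ P` and every `y'` with
`1 ≤ y' ≤ ŷ`, one has `Q(S', y') ≥ Q̄ · (1 − |Ŝ \ S'|)`. -/
theorem three_stage_lbbd_cut_valid {α σ : Type*} [DecidableEq α]
    (P : Finset α) (c : α → ℝ) (𝒮 : Finset σ) (h𝒮 : 𝒮.Nonempty)
    (T : σ → α → ℝ) (B : ℝ)
    (hc : ∀ p ∈ P, 0 ≤ c p) (hT : ∀ s ∈ 𝒮, ∀ p ∈ P, 0 ≤ T s p) (hB : 0 ≤ B)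
    (Shat : Finset α) (hShat : Shat ⊆ P) (yhat : ℕ) (hyhat : 1 ≤ yhat)
    (S' : Finset α) (hS' : S' ⊆ P) (y' : ℕ) (hy'1 : 1 ≤ y') (hy' : y' ≤ yhat) :
    Qexp c 𝒮 T hB S' y' ≥ Qexp c 𝒮 T hB Shat yhat * (1 - ((Shat \ S').card : ℝ)) := by
  rcases Nat.eq_zero_or_pos (Shat \ S').card with h0 | hpos
  · have hsub : Shat ⊆ S' := by
      rw [← Finset.sdiff_eq_empty_iff_subset]
      exact Finset.card_eq_zero.mp h0
    rw [h0]
    simp only [Nat.cast_zero, sub_zero, mul_one, ge_iff_le]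
    exact Qexp_mono hB (fun p hp => hc p (hS' hp)) (fun s hs p hp => hT s hs p (hS' hp))
      hsub hy'1 hy'
  · have h1 : (1 : ℝ) - ((Shat \ S').card : ℝ) ≤ 0 := by
      have : (1 : ℝ) ≤ ((Shat \ S').card : ℝ) := by exact_mod_cast hpos
      linarith
    have hQ : 0 ≤ Qexp c 𝒮 T hB Shat yhat :=
      Qexp_nonneg hB fun p hp => hc p (hShat hp)
    have hQ' : 0 ≤ Qexp c 𝒮 T hB S' y' :=
      Qexp_nonneg hB fun p hp => hc p (hS' hp)
    have := mul_nonpos_of_nonneg_of_nonpos hQ h1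
    linarith
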